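/- arXiv:2310.01394 — 2 statements merged into one kernel-verified Lean document; each statement's English description precedes it below -/
import Mathlib

section
/- For all real numbers 3/5 ≤ α ≤ 2/3 and β > 0: if τ(n) ≥ β·n^α for all n ≥ 2, then t^(2)(n) ≥ β·(n/4)^α for all n ≥ 2. -/
/-- A (sub-)matching: a finite set of pairwise disjoint `r`-element subsets
("edges") of the linearly ordered vertex set `ℕ`. -/
def IsMatching (r : ℕ) (M : Finset (Finset ℕ)) : Prop :=
  (∀ e ∈ M, e.card = r) ∧ ∀ e ∈ M, ∀ f ∈ M, e ≠ f → Disjoint e f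

/-- The vertex support of a matching: the union of its edges. -/
def mSupport (M : Finset (Finset ℕ)) : Finset ℕ := M.sup id

/-- An ordered `r`-matching of size `n`: `n` pairwise disjoint `r`-element edges
partitioning `[rn] = {1, …, rn}`. -/
def IsOrderedMatching (r n : ℕ) (M : Finset (Finset ℕ)) : Prop :=
  IsMatching r M ∧ M.card = n ∧ mSupport M = Finset.Icc 1 (r * n)

/-- Two ordered matchings are isomorphic if some (equivalently, the unique)
order-preserving bijection between their vertex supports maps edges onto edges. -/
def MatchIso (M N : Finset (Finset ℕ)) : Prop :=
  ∃ f : ℕ → ℕ, Set.BijOn f (mSupport M : Set ℕ) (mSupport N : Set ℕ) ∧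
    (∀ x ∈ mSupport M, ∀ y ∈ mSupport M, x < y → f x < f y) ∧
    N = M.image fun e => e.image f

/-- `M` contains twins of size `k`: a pair of vertex-disjoint isomorphic
sub-matchings of `M`, each with `k` edges. -/
def HasTwins (M : Finset (Finset ℕ)) (k : ℕ) : Prop :=
  ∃ M₁ M₂ : Finset (Finset ℕ), M₁ ⊆ M ∧ M₂ ⊆ M ∧
    Disjoint (mSupport M₁) (mSupport M₂) ∧ MatchIso M₁ M₂ ∧
    M₁.card = k ∧ M₂.card = k

/-- `t(M)`: the maximum size of twins in `M`. -/
noncomputable def twinMax (M : Finset (Finset ℕ)) : ℕ := sSup {k | HasTwins M k}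

/-- `t^(r)(n)`: the minimum of `t(M)` over all ordered `r`-matchings of size `n`. -/
noncomputable def minTwins (r n : ℕ) : ℕ :=
  sInf {t | ∃ M, IsOrderedMatching r n M ∧ twinMax M = t}

/-- A permutation `π` of `[n]` has twins of length `k`: two order-isomorphic
subsequences occupying disjoint sets of positions. -/
def PermTwins {n : ℕ} (π : Equiv.Perm (Fin n)) (k : ℕ) : Prop :=
  ∃ a b : Fin k → Fin n, StrictMono a ∧ StrictMono b ∧
    (∀ i j, a i ≠ b j) ∧ ∀ i j, (π (a i) < π (a j) ↔ π (b i) < π (b j))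

/-- `τ(n)`: the largest `k` such that every permutation of `[n]` has twins of length `k`. -/
noncomputable def permTau (n : ℕ) : ℕ :=
  sSup {k | ∀ π : Equiv.Perm (Fin n), PermTwins π k}

/-- An `r`-pattern, represented by its canonical representative: an ordered
`r`-matching of size `2` (on the vertex set `[2r]`). Every isomorphism class of
ordered `r`-matchings of size `2` contains exactly one such representative. -/
def IsPattern (r : ℕ) (P : Finset (Finset ℕ)) : Prop := IsOrderedMatching r 2 P

/-- A `P`-clique: a matching all of whose pairs of (distinct) edges form the pattern `P`. -/
def IsPClique (P M : Finset (Finset ℕ)) : Prop :=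
  ∀ e ∈ M, ∀ f ∈ M, e ≠ f → MatchIso {e, f} P

/-- `L(M)`: the size of the largest sub-matching of `M` that is a `P`-clique,
over all `r`-patterns `P`. -/
noncomputable def cliqueMax (r : ℕ) (M : Finset (Finset ℕ)) : ℕ :=
  sSup {k | ∃ P, IsPattern r P ∧ ∃ M' ⊆ M, IsPClique P M' ∧ M'.card = k}

/-- `L_r(n)`: the minimum of `L(M)` over all ordered `r`-matchings of size `n`. -/
noncomputable def minClique (r n : ℕ) : ℕ :=
  sInf {l | ∃ M, IsOrderedMatching r n M ∧ cliqueMax r M = l}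

section TwinsProof
open Finset

lemma mem_mSupport {M : Finset (Finset ℕ)} {x : ℕ} :
    x ∈ mSupport M ↔ ∃ e ∈ M, x ∈ e := by
  simp [mSupport, Finset.mem_sup]

lemma subset_mSupport {M : Finset (Finset ℕ)} {e : Finset ℕ} (he : e ∈ M) :
    e ⊆ mSupport M := fun x hx => mem_mSupport.2 ⟨e, he, hx⟩

lemma mSupport_mono {M N : Finset (Finset ℕ)} (h : M ⊆ N) :
    mSupport M ⊆ mSupport N := Finset.le_iff_subset.mp (Finset.sup_mono h)

lemma mSupport_union {M N : Finset (Finset ℕ)} :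
    mSupport (M ∪ N) = mSupport M ∪ mSupport N := Finset.sup_union

lemma mSupport_empty : mSupport (∅ : Finset (Finset ℕ)) = ∅ := rfl

/-- canonical order preserving map between two finsets of naturals -/
noncomputable def omap (S T : Finset ℕ) : ℕ → ℕ :=
  fun x => if h : T.card = S.card ∧ x ∈ S then
    T.orderEmbOfFin h.1 ((S.orderIsoOfFin rfl).symm ⟨x, h.2⟩) else x

lemma omap_emb {S T : Finset ℕ} {k : ℕ} (hS : S.card = k) (hT : T.card = k) (i : Fin k) :
    omap S T (S.orderEmbOfFin hS i) = T.orderEmbOfFin hT i := by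
  subst hS
  have hmem : S.orderEmbOfFin rfl i ∈ S := Finset.orderEmbOfFin_mem S rfl i
  have hc : T.card = S.card := hT
  rw [omap, dif_pos ⟨hc, hmem⟩]
  have : (S.orderIsoOfFin rfl).symm ⟨S.orderEmbOfFin rfl i, hmem⟩ = i := by
    apply (S.orderIsoOfFin rfl).injective
    apply Subtype.ext
    simp [Finset.coe_orderIsoOfFin_apply]
  rw [this]

lemma omap_apply_of_strictMono {S T : Finset ℕ} {k : ℕ} {v w : Fin k → ℕ}
    (hv : StrictMono v) (hw : StrictMono w)
    (hS : S = Finset.image v Finset.univ) (hT : T = Finset.image w Finset.univ) (i : Fin k) :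
    omap S T (v i) = w i := by
  have hSc : S.card = k := by
    rw [hS, Finset.card_image_of_injective _ hv.injective, Finset.card_univ, Fintype.card_fin]
  have hTc : T.card = k := by
    rw [hT, Finset.card_image_of_injective _ hw.injective, Finset.card_univ, Fintype.card_fin]
  have hv' : v = S.orderEmbOfFin hSc := by
    apply Finset.orderEmbOfFin_unique hSc _ hv
    intro x; rw [hS]; exact Finset.mem_image_of_mem v (Finset.mem_univ x)
  have hw' : w = T.orderEmbOfFin hTc := by
    apply Finset.orderEmbOfFin_unique hTc _ hw
    intro x; rw [hT]; exact Finset.mem_image_of_mem w (Finset.mem_univ x)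
  rw [hv', hw']
  exact omap_emb hSc hTc i

lemma omap_mem {S T : Finset ℕ} (h : T.card = S.card) {x : ℕ} (hx : x ∈ S) :
    omap S T x ∈ T := by
  rw [omap, dif_pos ⟨h, hx⟩]
  exact Finset.orderEmbOfFin_mem T h _

lemma omap_strictMonoOn {S T : Finset ℕ} (h : T.card = S.card) :
    ∀ x ∈ S, ∀ y ∈ S, x < y → omap S T x < omap S T y := by
  intro x hx y hy hxy
  rw [omap, dif_pos ⟨h, hx⟩, omap, dif_pos ⟨h, hy⟩]
  apply (T.orderEmbOfFin h).strictMono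
  apply (S.orderIsoOfFin rfl).symm.strictMono
  exact hxy

lemma omap_image {S T : Finset ℕ} (h : T.card = S.card) :
    S.image (omap S T) = T := by
  apply Finset.eq_of_subset_of_card_le
  · intro y hy
    rcases Finset.mem_image.1 hy with ⟨x, hx, rfl⟩
    exact omap_mem h hx
  · rw [h, Finset.card_image_of_injOn]
    intro x hx y hy hxy
    by_contra hne
    rcases lt_or_gt_of_ne hne with h' | h'
    · exact absurd hxy (ne_of_lt (omap_strictMonoOn h x hx y hy h'))
    · exact absurd hxy.symm (ne_of_lt (omap_strictMonoOn h y hy x hx h'))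

lemma omap_bijOn {S T : Finset ℕ} (h : T.card = S.card) :
    Set.BijOn (omap S T) (S : Set ℕ) (T : Set ℕ) := by
  refine ⟨fun x hx => omap_mem h hx, ?_, ?_⟩
  · intro x hx y hy hxy
    by_contra hne
    rcases lt_or_gt_of_ne hne with h' | h'
    · exact absurd hxy (ne_of_lt (omap_strictMonoOn h x hx y hy h'))
    · exact absurd hxy.symm (ne_of_lt (omap_strictMonoOn h y hy x hx h'))
  · intro y hy
    have := omap_image h
    rw [← this] at hy
    rcases Finset.mem_image.1 (by exact_mod_cast hy) with ⟨x, hx, rfl⟩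
    exact ⟨x, hx, rfl⟩

lemma hasTwins_zero (M : Finset (Finset ℕ)) : HasTwins M 0 := by
  refine ⟨∅, ∅, Finset.empty_subset _, Finset.empty_subset _, ?_, ?_, rfl, rfl⟩
  · simp [mSupport]
  · exact ⟨id, by simp [mSupport], by simp [mSupport], by simp⟩

lemma hasTwins_le {M : Finset (Finset ℕ)} {k : ℕ} (h : HasTwins M k) : k ≤ M.card := by
  obtain ⟨M₁, _, hM₁, _, _, _, hcard, _⟩ := h
  rw [← hcard]
  exact Finset.card_le_card hM₁

lemma hasTwins_bdd (M : Finset (Finset ℕ)) : BddAbove {k | HasTwins M k} :=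
  ⟨M.card, fun _ hk => hasTwins_le hk⟩

lemma hasTwins_mono {M N : Finset (Finset ℕ)} (h : M ⊆ N) {k : ℕ} (ht : HasTwins M k) :
    HasTwins N k := by
  obtain ⟨M₁, M₂, h1, h2, h3, h4, h5, h6⟩ := ht
  exact ⟨M₁, M₂, h1.trans h, h2.trans h, h3, h4, h5, h6⟩

lemma le_twinMax {M : Finset (Finset ℕ)} {k : ℕ} (h : HasTwins M k) : k ≤ twinMax M :=
  le_csSup (hasTwins_bdd M) h

lemma twinMax_hasTwins (M : Finset (Finset ℕ)) : HasTwins M (twinMax M) :=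
  Nat.sSup_mem ⟨0, by exact hasTwins_zero M⟩ (hasTwins_bdd M)

lemma mSupport_singleton {e : Finset ℕ} : mSupport {e} = e := by
  simp [mSupport]

/-- twins of size one from two disjoint edges of equal cardinality -/
lemma hasTwins_one {M : Finset (Finset ℕ)} {e f : Finset ℕ} (he : e ∈ M) (hf : f ∈ M)
    (hcard : f.card = e.card) (hdisj : Disjoint e f) : HasTwins M 1 := by
  refine ⟨{e}, {f}, by simpa using he, by simpa using hf, ?_, ?_, rfl, rfl⟩
  · rwa [mSupport_singleton, mSupport_singleton]
  · refine ⟨omap e f, ?_, ?_, ?_⟩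
    · rw [mSupport_singleton, mSupport_singleton]; exact omap_bijOn hcard
    · rw [mSupport_singleton]; exact omap_strictMonoOn hcard
    · rw [Finset.image_singleton, omap_image hcard]

lemma permTwins_zero {n : ℕ} (π : Equiv.Perm (Fin n)) : PermTwins π 0 :=
  ⟨Fin.elim0, Fin.elim0, by intro i; exact i.elim0, by intro i; exact i.elim0,
    by intro i; exact i.elim0, by intro i; exact i.elim0⟩

lemma permTwins_le {n k : ℕ} {π : Equiv.Perm (Fin n)} (h : PermTwins π k) : k ≤ n := by
  obtain ⟨a, _, ha, _, _, _⟩ := h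
  simpa using Fintype.card_le_of_injective a ha.injective

lemma permTau_bdd (n : ℕ) : BddAbove {k | ∀ π : Equiv.Perm (Fin n), PermTwins π k} :=
  ⟨n, fun _ hk => permTwins_le (hk 1)⟩

lemma permTau_spec (n : ℕ) : ∀ π : Equiv.Perm (Fin n), PermTwins π (permTau n) :=
  Nat.sSup_mem (⟨0, by intro π; exact permTwins_zero π⟩ :
    Set.Nonempty {k | ∀ π : Equiv.Perm (Fin n), PermTwins π k}) (permTau_bdd n)

lemma permTau_two_le : permTau 2 ≤ 1 := by
  apply csSup_le ⟨0, by intro π; exact permTwins_zero π⟩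
  intro k hk
  by_contra hk2
  push_neg at hk2
  obtain ⟨a, b, ha, hb, hab, _⟩ := hk 1
  -- images of a and b are disjoint subsets of Fin 2, each of size k ≥ 2
  have hcard : (Finset.image a Finset.univ ∪ Finset.image b Finset.univ).card = 2 * k := by
    rw [Finset.card_union_of_disjoint, Finset.card_image_of_injective _ ha.injective,
      Finset.card_image_of_injective _ hb.injective, Finset.card_univ, Fintype.card_fin]
    · ring
    · rw [Finset.disjoint_left]
      rintro x hx hx'
      rcases Finset.mem_image.1 hx with ⟨i, _, rfl⟩
      rcases Finset.mem_image.1 hx' with ⟨j, _, hj⟩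
      exact hab i j hj.symm
  have : (Finset.image a Finset.univ ∪ Finset.image b Finset.univ).card ≤ 2 := by
    have := Finset.card_le_card (Finset.subset_univ
      (Finset.image a Finset.univ ∪ Finset.image b Finset.univ))
    simpa using this
  omega

lemma fin_filter_lt_card {m : ℕ} (j : Fin m) :
    ((Finset.univ : Finset (Fin m)).filter (fun i : Fin m => (i : ℕ) < (j : ℕ))).card = j := by
  have : Finset.image (fun i : Fin m => (i : ℕ))
      ((Finset.univ : Finset (Fin m)).filter (fun i : Fin m => (i : ℕ) < (j : ℕ))) =
      Finset.range j := by
    ext x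
    simp only [Finset.mem_image, Finset.mem_filter, Finset.mem_univ, true_and, Finset.mem_range]
    constructor
    · rintro ⟨i, hi, rfl⟩; exact hi
    · intro hx; exact ⟨⟨x, lt_trans hx j.2⟩, hx, rfl⟩
  have hinj := Finset.card_image_of_injective
    ((Finset.univ : Finset (Fin m)).filter (fun i : Fin m => (i : ℕ) < (j : ℕ))) Fin.val_injective
  rw [this] at hinj
  rw [← hinj, Finset.card_range]

lemma fin_filter_le_card {m : ℕ} (j : Fin m) :
    ((Finset.univ : Finset (Fin m)).filter (fun i : Fin m => (i : ℕ) ≤ (j : ℕ))).card = j + 1 := by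
  have : Finset.image (fun i : Fin m => (i : ℕ))
      ((Finset.univ : Finset (Fin m)).filter (fun i : Fin m => (i : ℕ) ≤ (j : ℕ))) =
      Finset.range (j + 1) := by
    ext x
    simp only [Finset.mem_image, Finset.mem_filter, Finset.mem_univ, true_and, Finset.mem_range]
    constructor
    · rintro ⟨i, hi, rfl⟩; omega
    · intro hx
      have hxm : x < m := lt_of_lt_of_le (by omega : x < (j:ℕ)+1) j.2
      exact ⟨⟨x, hxm⟩, by simpa using Nat.lt_succ_iff.mp hx, rfl⟩
  have hinj := Finset.card_image_of_injective
    ((Finset.univ : Finset (Fin m)).filter (fun i : Fin m => (i : ℕ) ≤ (j : ℕ))) Fin.val_injective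
  rw [this] at hinj
  rw [← hinj, Finset.card_range]

/-- there is a split point p with exactly m elements of S at most p, for 1 ≤ m ≤ |S| -/
lemma exists_split (S : Finset ℕ) {m : ℕ} (hm : 1 ≤ m) (hm2 : m ≤ S.card) :
    ∃ p, (S.filter (fun x => x ≤ p)).card = m := by
  set k := S.card with hk
  have hj : m - 1 < k := by omega
  set j : Fin k := ⟨m - 1, hj⟩
  set p := S.orderEmbOfFin rfl j with hp
  refine ⟨p, ?_⟩
  have himg : S.filter (fun x => x ≤ p) =
      Finset.image (S.orderEmbOfFin rfl)
        ((Finset.univ : Finset (Fin k)).filter (fun i : Fin k => (i : ℕ) ≤ (j : ℕ))) := by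
    ext x
    simp only [Finset.mem_filter, Finset.mem_image, Finset.mem_univ, true_and]
    constructor
    · rintro ⟨hxS, hxp⟩
      have : x ∈ Set.range (S.orderEmbOfFin rfl) := by
        rw [Finset.range_orderEmbOfFin]; exact hxS
      obtain ⟨i, rfl⟩ := this
      refine ⟨i, ?_, rfl⟩
      have : i ≤ j := (S.orderEmbOfFin rfl).le_iff_le.mp hxp
      exact this
    · rintro ⟨i, hi, rfl⟩
      refine ⟨Finset.orderEmbOfFin_mem S rfl i, ?_⟩
      exact (S.orderEmbOfFin rfl).monotone (by exact hi)
  rw [himg, Finset.card_image_of_injective _ (S.orderEmbOfFin rfl).injective,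
    fin_filter_le_card]
  simp only [j]
  omega

lemma mSupport_eq_biUnion (M : Finset (Finset ℕ)) : mSupport M = M.biUnion (fun e => e) := by
  ext x; simp [mem_mSupport]

lemma card_mSupport {M : Finset (Finset ℕ)} (hM : IsMatching 2 M) :
    (mSupport M).card = 2 * M.card := by
  rw [mSupport_eq_biUnion, Finset.card_biUnion (fun e he f hf hef => hM.2 e he f hf hef)]
  rw [Finset.sum_congr rfl (fun e he => hM.1 e he)]
  simp [Finset.sum_const, mul_comm]

/-- a crossing edge has exactly one endpoint at most p -/
lemma crossing_filter_card {e : Finset ℕ} (he : e.card = 2) (p : ℕ)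
    (h1 : ∃ x ∈ e, x ≤ p) (h2 : ∃ x ∈ e, p < x) :
    (e.filter (fun x => x ≤ p)).card = 1 ∧ (e.filter (fun x => p < x)).card = 1 := by
  have hsum : (e.filter (fun x => x ≤ p)).card + (e.filter (fun x => ¬ x ≤ p)).card = e.card :=
    Finset.card_filter_add_card_filter_not _
  have heq : e.filter (fun x => ¬ x ≤ p) = e.filter (fun x => p < x) := by
    apply Finset.filter_congr; intro x _; simp [not_le]
  rw [heq, he] at hsum
  obtain ⟨x, hx, hxp⟩ := h1
  obtain ⟨y, hy, hyp⟩ := h2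
  have c1 : 1 ≤ (e.filter (fun x => x ≤ p)).card :=
    Finset.card_pos.mpr ⟨x, Finset.mem_filter.2 ⟨hx, hxp⟩⟩
  have c2 : 1 ≤ (e.filter (fun x => p < x)).card :=
    Finset.card_pos.mpr ⟨y, Finset.mem_filter.2 ⟨hy, hyp⟩⟩
  omega

lemma count_split {M : Finset (Finset ℕ)} (hM : IsMatching 2 M) (p : ℕ) :
    ((mSupport M).filter (fun x => x ≤ p)).card
      = 2 * (M.filter (fun e => ∀ x ∈ e, x ≤ p)).card
        + (M.filter (fun e => (∃ x ∈ e, x ≤ p) ∧ ∃ x ∈ e, p < x)).card := by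
  have hbi : (mSupport M).filter (fun x => x ≤ p)
      = M.biUnion (fun e => e.filter (fun x => x ≤ p)) := by
    ext x
    simp only [Finset.mem_filter, Finset.mem_biUnion, mem_mSupport]
    tauto
  rw [hbi, Finset.card_biUnion]
  swap
  · intro e he f hf hef
    exact Finset.disjoint_filter_filter (hM.2 e he f hf hef)
  -- now compute the sum
  have key : ∀ e ∈ M, (e.filter (fun x => x ≤ p)).card =
      (if (∀ x ∈ e, x ≤ p) then 2 else if (∃ x ∈ e, x ≤ p) ∧ (∃ x ∈ e, p < x) then 1 else 0) := by
    intro e he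
    have hc := hM.1 e he
    by_cases hall : ∀ x ∈ e, x ≤ p
    · rw [if_pos hall, Finset.filter_true_of_mem hall, hc]
    · rw [if_neg hall]
      push_neg at hall
      obtain ⟨y, hy, hyp⟩ := hall
      by_cases hex : ∃ x ∈ e, x ≤ p
      · rw [if_pos ⟨hex, ⟨y, hy, by omega⟩⟩]
        exact (crossing_filter_card hc p hex ⟨y, hy, by omega⟩).1
      · rw [if_neg (fun h => hex h.1)]
        rw [Finset.card_eq_zero, Finset.filter_eq_empty_iff]
        intro x hx hxp
        exact hex ⟨x, hx, hxp⟩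
  rw [Finset.sum_congr rfl key]
  rw [Finset.sum_ite, Finset.sum_ite]
  simp only [Finset.sum_const, smul_eq_mul]
  have : (Finset.filter (fun e => ¬∀ x ∈ e, x ≤ p) M).filter
      (fun e => (∃ x ∈ e, x ≤ p) ∧ ∃ x ∈ e, p < x)
      = M.filter (fun e => (∃ x ∈ e, x ≤ p) ∧ ∃ x ∈ e, p < x) := by
    rw [Finset.filter_filter]
    apply Finset.filter_congr
    intro e _
    constructor
    · exact fun h => h.2
    · rintro h
      refine ⟨?_, h⟩
      push_neg
      obtain ⟨-, y, hy, hyp⟩ := h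
      exact ⟨y, hy, by omega⟩
  rw [this]
  ring

lemma count_split' {M : Finset (Finset ℕ)} (hM : IsMatching 2 M) (p : ℕ) :
    ((mSupport M).filter (fun x => p < x)).card
      = 2 * (M.filter (fun e => ∀ x ∈ e, p < x)).card
        + (M.filter (fun e => (∃ x ∈ e, x ≤ p) ∧ ∃ x ∈ e, p < x)).card := by
  have hbi : (mSupport M).filter (fun x => p < x)
      = M.biUnion (fun e => e.filter (fun x => p < x)) := by
    ext x
    simp only [Finset.mem_filter, Finset.mem_biUnion, mem_mSupport]
    tauto
  rw [hbi, Finset.card_biUnion]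
  swap
  · intro e he f hf hef
    exact Finset.disjoint_filter_filter (hM.2 e he f hf hef)
  have key : ∀ e ∈ M, (e.filter (fun x => p < x)).card =
      (if (∀ x ∈ e, p < x) then 2 else if (∃ x ∈ e, x ≤ p) ∧ (∃ x ∈ e, p < x) then 1 else 0) := by
    intro e he
    have hc := hM.1 e he
    by_cases hall : ∀ x ∈ e, p < x
    · rw [if_pos hall, Finset.filter_true_of_mem hall, hc]
    · rw [if_neg hall]
      push_neg at hall
      obtain ⟨y, hy, hyp⟩ := hall
      by_cases hex : ∃ x ∈ e, p < x
      · rw [if_pos ⟨⟨y, hy, hyp⟩, hex⟩]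
        exact (crossing_filter_card hc p ⟨y, hy, hyp⟩ hex).2
      · rw [if_neg (fun h => hex h.2)]
        rw [Finset.card_eq_zero, Finset.filter_eq_empty_iff]
        intro x hx hxp
        exact hex ⟨x, hx, hxp⟩
  rw [Finset.sum_congr rfl key]
  rw [Finset.sum_ite, Finset.sum_ite]
  simp only [Finset.sum_const, smul_eq_mul]
  have : (Finset.filter (fun e => ¬∀ x ∈ e, p < x) M).filter
      (fun e => (∃ x ∈ e, x ≤ p) ∧ ∃ x ∈ e, p < x)
      = M.filter (fun e => (∃ x ∈ e, x ≤ p) ∧ ∃ x ∈ e, p < x) := by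
    rw [Finset.filter_filter]
    apply Finset.filter_congr
    intro e _
    constructor
    · exact fun h => h.2
    · rintro h
      refine ⟨?_, h⟩
      push_neg
      obtain ⟨⟨y, hy, hyp⟩, -⟩ := h
      exact ⟨y, hy, by omega⟩
  rw [this]
  ring

lemma hasTwins_union {M A B : Finset (Finset ℕ)} {p k₁ k₂ : ℕ}
    (hA : A ⊆ M) (hB : B ⊆ M)
    (hAne : ∀ e ∈ A, e.Nonempty) (hBne : ∀ e ∈ B, e.Nonempty)
    (hAp : ∀ x ∈ mSupport A, x ≤ p) (hBp : ∀ x ∈ mSupport B, p < x)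
    (h1 : HasTwins A k₁) (h2 : HasTwins B k₂) : HasTwins M (k₁ + k₂) := by
  obtain ⟨A₁, A₂, hA₁, hA₂, hAd, ⟨f, hfb, hfm, hfe⟩, hA₁c, hA₂c⟩ := h1
  obtain ⟨B₁, B₂, hB₁, hB₂, hBd, ⟨g, hgb, hgm, hge⟩, hB₁c, hB₂c⟩ := h2
  -- support bounds
  have sA : ∀ {C : Finset (Finset ℕ)}, C ⊆ A → ∀ x ∈ mSupport C, x ≤ p :=
    fun hC x hx => hAp x (mSupport_mono hC hx)
  have sB : ∀ {C : Finset (Finset ℕ)}, C ⊆ B → ∀ x ∈ mSupport C, p < x :=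
    fun hC x hx => hBp x (mSupport_mono hC hx)
  set F : ℕ → ℕ := fun x => if x ≤ p then f x else g x with hF
  have hFA : ∀ x ∈ mSupport A₁, F x = f x := fun x hx => if_pos (sA hA₁ x hx)
  have hFB : ∀ x ∈ mSupport B₁, F x = g x := fun x hx => if_neg (by
    have := sB hB₁ x hx; omega)
  -- disjointness of the two twin halves
  have hdisjsup : Disjoint (mSupport (A₁ ∪ B₁)) (mSupport (A₂ ∪ B₂)) := by
    rw [mSupport_union, mSupport_union]
    rw [Finset.disjoint_union_left]
    constructor
    · rw [Finset.disjoint_union_right]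
      refine ⟨hAd, ?_⟩
      rw [Finset.disjoint_left]
      intro x hx hx'
      have := sA hA₁ x hx
      have := sB hB₂ x hx'
      omega
    · rw [Finset.disjoint_union_right]
      constructor
      · rw [Finset.disjoint_left]
        intro x hx hx'
        have := sB hB₁ x hx
        have := sA hA₂ x hx'
        omega
      · exact hBd
  -- finset disjointness of A₁ B₁ and A₂ B₂
  have hfsd : ∀ {C D : Finset (Finset ℕ)}, C ⊆ A → D ⊆ B → Disjoint C D := by
    intro C D hC hD
    rw [Finset.disjoint_left]
    intro e he he'
    obtain ⟨x, hx⟩ := hAne e (hC he)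
    have h1 := sA hC x (mem_mSupport.2 ⟨e, he, hx⟩)
    have h2 := sB hD x (mem_mSupport.2 ⟨e, he', hx⟩)
    omega
  refine ⟨A₁ ∪ B₁, A₂ ∪ B₂, Finset.union_subset (hA₁.trans hA) (hB₁.trans hB),
    Finset.union_subset (hA₂.trans hA) (hB₂.trans hB), hdisjsup, ⟨F, ?_, ?_, ?_⟩, ?_, ?_⟩
  · -- BijOn
    rw [mSupport_union, mSupport_union, Finset.coe_union, Finset.coe_union]
    apply Set.BijOn.union
    · exact Set.BijOn.congr hfb (fun x hx => (hFA x hx).symm)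
    · exact Set.BijOn.congr hgb (fun x hx => (hFB x hx).symm)
    · intro x hx y hy hxy
      rcases hx with hx | hx
      · rcases hy with hy | hy
        · rw [hFA x hx, hFA y hy] at hxy
          exact hfb.injOn hx hy hxy
        · exfalso
          rw [hFA x hx, hFB y hy] at hxy
          have h1 : f x ∈ mSupport A₂ := hfb.mapsTo hx
          have h2 : g y ∈ mSupport B₂ := hgb.mapsTo hy
          have := sA hA₂ (f x) h1
          have := sB hB₂ (g y) h2
          omega
      · rcases hy with hy | hy
        · exfalso
          rw [hFB x hx, hFA y hy] at hxy
          have h1 : g x ∈ mSupport B₂ := hgb.mapsTo hx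
          have h2 : f y ∈ mSupport A₂ := hfb.mapsTo hy
          have := sB hB₂ (g x) h1
          have := sA hA₂ (f y) h2
          omega
        · rw [hFB x hx, hFB y hy] at hxy
          exact hgb.injOn hx hy hxy
  · -- strict mono
    intro x hx y hy hxy
    rw [mSupport_union, Finset.mem_union] at hx hy
    rcases hx with hx | hx
    · rcases hy with hy | hy
      · rw [hFA x hx, hFA y hy]
        exact hfm x hx y hy hxy
      · rw [hFA x hx, hFB y hy]
        have h1 : f x ∈ mSupport A₂ := hfb.mapsTo hx
        have h2 : g y ∈ mSupport B₂ := hgb.mapsTo hy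
        have := sA hA₂ (f x) h1
        have := sB hB₂ (g y) h2
        omega
    · rcases hy with hy | hy
      · exfalso
        have := sB hB₁ x hx
        have := sA hA₁ y hy
        omega
      · rw [hFB x hx, hFB y hy]
        exact hgm x hx y hy hxy
  · -- edges
    rw [Finset.image_union]
    congr 1
    · rw [hfe]
      apply Finset.image_congr
      intro e he
      apply Finset.image_congr
      intro x hx
      exact (hFA x (mem_mSupport.2 ⟨e, he, hx⟩)).symm
    · rw [hge]
      apply Finset.image_congr
      intro e he
      apply Finset.image_congr
      intro x hx
      exact (hFB x (mem_mSupport.2 ⟨e, he, hx⟩)).symm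
  · rw [Finset.card_union_of_disjoint (hfsd hA₁ hB₁), hA₁c, hB₁c]
  · rw [Finset.card_union_of_disjoint (hfsd hA₂ hB₂), hA₂c, hB₂c]

noncomputable def eleft (e : Finset ℕ) : ℕ := if h : e.Nonempty then e.min' h else 0
noncomputable def eright (e : Finset ℕ) : ℕ := if h : e.Nonempty then e.max' h else 0

lemma image_univ_comp_equiv {α β : Type*} [Fintype α] [DecidableEq β]
    (g : α → β) (σ : Equiv.Perm α) :
    Finset.image (fun i => g (σ i)) Finset.univ = Finset.image g Finset.univ := by
  ext x
  simp only [Finset.mem_image, Finset.mem_univ, true_and]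
  constructor
  · rintro ⟨i, rfl⟩; exact ⟨σ i, rfl⟩
  · rintro ⟨i, rfl⟩; exact ⟨σ.symm i, by rw [Equiv.apply_symm_apply]⟩

lemma crossing_twins {M : Finset (Finset ℕ)} (hM : IsMatching 2 M) (p : ℕ)
    (hcross : ∀ e ∈ M, (∃ x ∈ e, x ≤ p) ∧ ∃ x ∈ e, p < x) {K : ℕ}
    (hK : ∀ π : Equiv.Perm (Fin M.card), PermTwins π K) : HasTwins M K := by
  classical
  -- edge structure
  have hene : ∀ e ∈ M, e.Nonempty := fun e he =>
    Finset.card_pos.mp (by rw [hM.1 e he]; norm_num)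
  have helmem : ∀ e ∈ M, eleft e ∈ e := by
    intro e he; rw [eleft, dif_pos (hene e he)]; exact Finset.min'_mem e _
  have hermem : ∀ e ∈ M, eright e ∈ e := by
    intro e he; rw [eright, dif_pos (hene e he)]; exact Finset.max'_mem e _
  have helle : ∀ e ∈ M, eleft e ≤ p := by
    intro e he
    obtain ⟨x, hx, hxp⟩ := (hcross e he).1
    rw [eleft, dif_pos (hene e he)]
    exact le_trans (Finset.min'_le e x hx) hxp
  have hergt : ∀ e ∈ M, p < eright e := by
    intro e he
    obtain ⟨x, hx, hxp⟩ := (hcross e he).2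
    rw [eright, dif_pos (hene e he)]
    exact lt_of_lt_of_le hxp (Finset.le_max' e x hx)
  have hestruct : ∀ e ∈ M, e = {eleft e, eright e} := by
    intro e he
    have hne : eleft e ≠ eright e := by
      have := helle e he; have := hergt e he; omega
    have hsub : ({eleft e, eright e} : Finset ℕ) ⊆ e := by
      intro x hx
      rcases Finset.mem_insert.1 hx with rfl | hx
      · exact helmem e he
      · rw [Finset.mem_singleton.1 hx]; exact hermem e he
    refine (Finset.eq_of_subset_of_card_le hsub ?_).symm
    rw [hM.1 e he, Finset.card_insert_of_notMem (by simpa using hne), Finset.card_singleton]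
  -- injectivity of endpoints
  have hedge_eq : ∀ e ∈ M, ∀ f ∈ M, ∀ x, x ∈ e → x ∈ f → e = f := by
    intro e he f hf x hx hxf
    by_contra hne
    exact Finset.disjoint_left.1 (hM.2 e he f hf hne) hx hxf
  have hel_inj : ∀ e ∈ M, ∀ f ∈ M, eleft e = eleft f → e = f := by
    intro e he f hf h
    exact hedge_eq e he f hf (eleft e) (helmem e he) (h ▸ helmem f hf)
  have her_inj : ∀ e ∈ M, ∀ f ∈ M, eright e = eright f → e = f := by
    intro e he f hf h
    exact hedge_eq e he f hf (eright e) (hermem e he) (h ▸ hermem f hf)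
  -- lefts and rights
  set lefts : Finset ℕ := M.image eleft with hlefts
  set rights : Finset ℕ := M.image eright with hrights
  have hlc : lefts.card = M.card :=
    Finset.card_image_of_injOn (fun e he f hf h => hel_inj e he f hf h)
  have hrc : rights.card = M.card :=
    Finset.card_image_of_injOn (fun e he f hf h => her_inj e he f hf h)
  set uL := lefts.orderEmbOfFin hlc with huL
  set uR := rights.orderEmbOfFin hrc with huR
  have huLlefts : ∀ i, uL i ∈ lefts := fun i => Finset.orderEmbOfFin_mem lefts hlc i
  have huRrights : ∀ i, uR i ∈ rights := fun i => Finset.orderEmbOfFin_mem rights hrc i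
  have hleftsp : ∀ x ∈ lefts, x ≤ p := by
    intro x hx
    rcases Finset.mem_image.1 hx with ⟨e, he, rfl⟩
    exact helle e he
  have hrightsp : ∀ x ∈ rights, p < x := by
    intro x hx
    rcases Finset.mem_image.1 hx with ⟨e, he, rfl⟩
    exact hergt e he
  -- the edge attached to each left endpoint
  have hEex : ∀ i : Fin M.card, ∃ e ∈ M, eleft e = uL i := by
    intro i
    exact Finset.mem_image.1 (huLlefts i)
  set E : Fin M.card → Finset ℕ := fun i => (hEex i).choose with hE
  have hEmem : ∀ i, E i ∈ M := fun i => (hEex i).choose_spec.1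
  have hElE : ∀ i, eleft (E i) = uL i := fun i => (hEex i).choose_spec.2
  have hE_inj : Function.Injective E := by
    intro i j h
    apply (lefts.orderEmbOfFin hlc).injective
    rw [← huL, ← hElE i, ← hElE j, h]
  set ρ : Fin M.card → ℕ := fun i => eright (E i) with hρ
  have hρrights : ∀ i, ρ i ∈ rights := fun i => Finset.mem_image_of_mem _ (hEmem i)
  -- ranks in rights
  set rnk : ℕ → ℕ := fun y => (rights.filter (fun x => x < y)).card with hrnk_def
  have hrnk_uR : ∀ j : Fin M.card, rnk (uR j) = j := by
    intro j
    have himg : rights.filter (fun x => x < uR j) =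
        Finset.image uR ((Finset.univ : Finset (Fin M.card)).filter
          (fun i : Fin M.card => (i : ℕ) < (j : ℕ))) := by
      ext x
      simp only [Finset.mem_filter, Finset.mem_image, Finset.mem_univ, true_and]
      constructor
      · rintro ⟨hxr, hxlt⟩
        have : x ∈ Set.range uR := by rw [huR, Finset.range_orderEmbOfFin]; exact hxr
        obtain ⟨i, rfl⟩ := this
        have hij : i < j := (uR.lt_iff_lt).mp hxlt
        exact ⟨i, hij, rfl⟩
      · rintro ⟨i, hij, rfl⟩
        exact ⟨huRrights i, uR.strictMono hij⟩
    rw [hrnk_def]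
    simp only
    rw [himg, Finset.card_image_of_injective _ uR.injective, fin_filter_lt_card]
  have hrnk_lt : ∀ y ∈ rights, rnk y < M.card := by
    intro y hy
    have : y ∈ Set.range uR := by rw [huR, Finset.range_orderEmbOfFin]; exact hy
    obtain ⟨j, rfl⟩ := this
    rw [hrnk_uR j]; exact j.2
  set π : Fin M.card → Fin M.card := fun i => ⟨rnk (ρ i), hrnk_lt _ (hρrights i)⟩ with hπ
  have huRπ : ∀ i, uR (π i) = ρ i := by
    intro i
    have : ρ i ∈ Set.range uR := by
      rw [huR, Finset.range_orderEmbOfFin]; exact hρrights i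
    obtain ⟨j, hj⟩ := this
    have : π i = j := by
      apply Fin.ext
      simp only [hπ, ← hj, hrnk_uR j]
    rw [this, hj]
  have hπ_inj : Function.Injective π := by
    intro i j h
    have h1 : ρ i = ρ j := by rw [← huRπ i, ← huRπ j, h]
    have h2 : E i = E j :=
      her_inj _ (hEmem i) _ (hEmem j) h1
    exact hE_inj h2
  set πe : Equiv.Perm (Fin M.card) :=
    Equiv.ofBijective π (Finite.injective_iff_bijective.mp hπ_inj) with hπe
  have hπe_apply : ∀ x, πe x = π x := fun x => rfl
  -- extract permutation twins
  obtain ⟨a, b, ha, hb, hab, hiff⟩ := hK πe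
  have hiff' : ∀ i j, (π (a i) < π (a j) ↔ π (b i) < π (b j)) := by
    intro i j
    rw [← hπe_apply, ← hπe_apply, ← hπe_apply, ← hπe_apply]
    exact hiff i j
  -- the two sub-matchings
  set M₁ : Finset (Finset ℕ) := Finset.image (fun i => E (a i)) Finset.univ with hM₁
  set M₂ : Finset (Finset ℕ) := Finset.image (fun i => E (b i)) Finset.univ with hM₂
  have hM₁sub : M₁ ⊆ M := by
    intro e he
    rcases Finset.mem_image.1 he with ⟨i, _, rfl⟩
    exact hEmem _
  have hM₂sub : M₂ ⊆ M := by
    intro e he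
    rcases Finset.mem_image.1 he with ⟨i, _, rfl⟩
    exact hEmem _
  have hEa_inj : Function.Injective (fun i => E (a i)) := fun i j h =>
    ha.injective (hE_inj h)
  have hEb_inj : Function.Injective (fun i => E (b i)) := fun i j h =>
    hb.injective (hE_inj h)
  have hM₁c : M₁.card = K := by
    rw [hM₁, Finset.card_image_of_injective _ hEa_inj, Finset.card_univ, Fintype.card_fin]
  have hM₂c : M₂.card = K := by
    rw [hM₂, Finset.card_image_of_injective _ hEb_inj, Finset.card_univ, Fintype.card_fin]
  -- support characterization
  have hsupchar : ∀ (v : Fin K → Fin M.card) (x : ℕ),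
      x ∈ mSupport (Finset.image (fun i => E (v i)) Finset.univ) ↔
        ∃ i, x = uL (v i) ∨ x = ρ (v i) := by
    intro v x
    rw [mem_mSupport]
    constructor
    · rintro ⟨e, he, hx⟩
      rcases Finset.mem_image.1 he with ⟨i, _, rfl⟩
      rw [hestruct _ (hEmem (v i))] at hx
      rcases Finset.mem_insert.1 hx with rfl | hx
      · exact ⟨i, Or.inl (hElE (v i))⟩
      · rw [Finset.mem_singleton.1 hx]
        exact ⟨i, Or.inr rfl⟩
    · rintro ⟨i, rfl | rfl⟩
      · exact ⟨E (v i), Finset.mem_image_of_mem _ (Finset.mem_univ i), by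
          rw [← hElE (v i)]; exact helmem _ (hEmem (v i))⟩
      · exact ⟨E (v i), Finset.mem_image_of_mem _ (Finset.mem_univ i), hermem _ (hEmem (v i))⟩
  have huLp : ∀ i, uL i ≤ p := fun i => hleftsp _ (huLlefts i)
  have hρp : ∀ i, p < ρ i := fun i => hrightsp _ (hρrights i)
  -- disjointness of supports
  have hdisj : Disjoint (mSupport M₁) (mSupport M₂) := by
    rw [Finset.disjoint_left]
    intro x hx1 hx2
    rw [hM₁] at hx1; rw [hM₂] at hx2
    obtain ⟨i, hi⟩ := (hsupchar a x).1 hx1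
    obtain ⟨j, hj⟩ := (hsupchar b x).1 hx2
    rcases hi with rfl | rfl
    · rcases hj with hj | hj
      · exact hab i j ((lefts.orderEmbOfFin hlc).injective hj)
      · have := huLp (a i); have := hρp (b j); omega
    · rcases hj with hj | hj
      · have := hρp (a i); have := huLp (b j); omega
      · have hEeq : E (a i) = E (b j) := her_inj _ (hEmem (a i)) _ (hEmem (b j)) hj
        have : uL (a i) = uL (b j) := by rw [← hElE (a i), ← hElE (b j), hEeq]
        exact hab i j ((lefts.orderEmbOfFin hlc).injective this)
  -- the four endpoint sets
  set L₁ : Finset ℕ := Finset.image (fun i => uL (a i)) Finset.univ with hL₁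
  set L₂ : Finset ℕ := Finset.image (fun i => uL (b i)) Finset.univ with hL₂
  set R₁ : Finset ℕ := Finset.image (fun i => ρ (a i)) Finset.univ with hR₁
  set R₂ : Finset ℕ := Finset.image (fun i => ρ (b i)) Finset.univ with hR₂
  have hwa : StrictMono (fun i => uL (a i)) := uL.strictMono.comp ha
  have hwb : StrictMono (fun i => uL (b i)) := uL.strictMono.comp hb
  have homapL : ∀ i, omap L₁ L₂ (uL (a i)) = uL (b i) :=
    fun i => omap_apply_of_strictMono hwa hwb hL₁ hL₂ i
  -- sort the right endpoints
  have hq_inj : Function.Injective (fun i => π (a i)) := fun i j h =>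
    ha.injective (hπ_inj h)
  have hr_inj : Function.Injective (fun i => π (b i)) := fun i j h =>
    hb.injective (hπ_inj h)
  set σ : Equiv.Perm (Fin K) := Tuple.sort (fun i => π (a i)) with hσ
  have hqm : StrictMono (fun j => π (a (σ j))) := by
    have hmono : Monotone ((fun i => π (a i)) ∘ σ) := Tuple.monotone_sort _
    exact hmono.strictMono_of_injective (hq_inj.comp σ.injective)
  have hrm : StrictMono (fun j => π (b (σ j))) := by
    intro i j hij
    have h1 : π (a (σ i)) < π (a (σ j)) := hqm hij
    exact (hiff' (σ i) (σ j)).mp h1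
  have hv : StrictMono (fun j => uR (π (a (σ j)))) := uR.strictMono.comp hqm
  have hw : StrictMono (fun j => uR (π (b (σ j)))) := uR.strictMono.comp hrm
  have hR₁' : R₁ = Finset.image (fun j => uR (π (a (σ j)))) Finset.univ := by
    rw [hR₁]
    have : (fun i => ρ (a i)) = fun i => uR (π (a i)) := by
      funext i; rw [huRπ]
    rw [this, image_univ_comp_equiv (fun i => uR (π (a i))) σ]
  have hR₂' : R₂ = Finset.image (fun j => uR (π (b (σ j)))) Finset.univ := by
    rw [hR₂]
    have : (fun i => ρ (b i)) = fun i => uR (π (b i)) := by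
      funext i; rw [huRπ]
    rw [this, image_univ_comp_equiv (fun i => uR (π (b i))) σ]
  have homapR : ∀ i, omap R₁ R₂ (ρ (a i)) = ρ (b i) := by
    intro i
    have h1 : ρ (a i) = uR (π (a (σ (σ.symm i)))) := by
      rw [Equiv.apply_symm_apply, huRπ]
    have h2 := omap_apply_of_strictMono hv hw hR₁' hR₂' (σ.symm i)
    rw [h1, h2, Equiv.apply_symm_apply, huRπ]
  -- cardinalities of endpoint sets
  have hL₁c : L₁.card = K := by
    rw [hL₁, Finset.card_image_of_injective _ hwa.injective, Finset.card_univ, Fintype.card_fin]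
  have hL₂c : L₂.card = K := by
    rw [hL₂, Finset.card_image_of_injective _ hwb.injective, Finset.card_univ, Fintype.card_fin]
  have hR₁c : R₁.card = K := by
    rw [hR₁', Finset.card_image_of_injective _ hv.injective, Finset.card_univ, Fintype.card_fin]
  have hR₂c : R₂.card = K := by
    rw [hR₂', Finset.card_image_of_injective _ hw.injective, Finset.card_univ, Fintype.card_fin]
  have hLcards : L₂.card = L₁.card := by rw [hL₁c, hL₂c]
  have hRcards : R₂.card = R₁.card := by rw [hR₁c, hR₂c]
  -- membership bounds
  have hL₁p : ∀ x ∈ L₁, x ≤ p := by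
    intro x hx; rcases Finset.mem_image.1 hx with ⟨i, _, rfl⟩; exact huLp (a i)
  have hL₂p : ∀ x ∈ L₂, x ≤ p := by
    intro x hx; rcases Finset.mem_image.1 hx with ⟨i, _, rfl⟩; exact huLp (b i)
  have hR₁p : ∀ x ∈ R₁, p < x := by
    intro x hx; rcases Finset.mem_image.1 hx with ⟨i, _, rfl⟩; exact hρp (a i)
  have hR₂p : ∀ x ∈ R₂, p < x := by
    intro x hx; rcases Finset.mem_image.1 hx with ⟨i, _, rfl⟩; exact hρp (b i)
  -- support = L ∪ R
  have hsup₁ : mSupport M₁ = L₁ ∪ R₁ := by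
    ext x
    rw [hM₁, hsupchar a x, Finset.mem_union, hL₁, hR₁]
    simp only [Finset.mem_image, Finset.mem_univ, true_and]
    constructor
    · rintro ⟨i, rfl | rfl⟩
      · exact Or.inl ⟨i, rfl⟩
      · exact Or.inr ⟨i, rfl⟩
    · rintro (⟨i, rfl⟩ | ⟨i, rfl⟩)
      · exact ⟨i, Or.inl rfl⟩
      · exact ⟨i, Or.inr rfl⟩
  have hsup₂ : mSupport M₂ = L₂ ∪ R₂ := by
    ext x
    rw [hM₂, hsupchar b x, Finset.mem_union, hL₂, hR₂]
    simp only [Finset.mem_image, Finset.mem_univ, true_and]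
    constructor
    · rintro ⟨i, rfl | rfl⟩
      · exact Or.inl ⟨i, rfl⟩
      · exact Or.inr ⟨i, rfl⟩
    · rintro (⟨i, rfl⟩ | ⟨i, rfl⟩)
      · exact ⟨i, Or.inl rfl⟩
      · exact ⟨i, Or.inr rfl⟩
  -- the isomorphism
  set F : ℕ → ℕ := fun x => if x ≤ p then omap L₁ L₂ x else omap R₁ R₂ x with hF
  have hFL : ∀ x ∈ L₁, F x = omap L₁ L₂ x := fun x hx => if_pos (hL₁p x hx)
  have hFR : ∀ x ∈ R₁, F x = omap R₁ R₂ x := fun x hx => if_neg (by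
    have := hR₁p x hx; omega)
  refine ⟨M₁, M₂, hM₁sub, hM₂sub, hdisj, ⟨F, ?_, ?_, ?_⟩, hM₁c, hM₂c⟩
  · -- BijOn
    rw [hsup₁, hsup₂, Finset.coe_union, Finset.coe_union]
    apply Set.BijOn.union
    · exact Set.BijOn.congr (omap_bijOn hLcards) (fun x hx => (hFL x hx).symm)
    · exact Set.BijOn.congr (omap_bijOn hRcards) (fun x hx => (hFR x hx).symm)
    · intro x hx y hy hxy
      rcases hx with hx | hx
      · rcases hy with hy | hy
        · rw [hFL x hx, hFL y hy] at hxy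
          exact (omap_bijOn hLcards).injOn hx hy hxy
        · exfalso
          rw [hFL x hx, hFR y hy] at hxy
          have h1 := hL₂p _ (omap_mem hLcards (by exact_mod_cast hx))
          have h2 := hR₂p _ (omap_mem hRcards (by exact_mod_cast hy))
          rw [hxy] at h1
          omega
      · rcases hy with hy | hy
        · exfalso
          rw [hFR x hx, hFL y hy] at hxy
          have h1 := hR₂p _ (omap_mem hRcards (by exact_mod_cast hx))
          have h2 := hL₂p _ (omap_mem hLcards (by exact_mod_cast hy))
          rw [hxy] at h1
          omega
        · rw [hFR x hx, hFR y hy] at hxy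
          exact (omap_bijOn hRcards).injOn hx hy hxy
  · -- strict mono
    intro x hx y hy hxy
    rw [hsup₁, Finset.mem_union] at hx hy
    rcases hx with hx | hx
    · rcases hy with hy | hy
      · rw [hFL x hx, hFL y hy]
        exact omap_strictMonoOn hLcards x hx y hy hxy
      · rw [hFL x hx, hFR y hy]
        have h1 := hL₂p _ (omap_mem hLcards hx)
        have h2 := hR₂p _ (omap_mem hRcards hy)
        omega
    · rcases hy with hy | hy
      · exfalso
        have := hR₁p x hx
        have := hL₁p y hy
        omega
      · rw [hFR x hx, hFR y hy]
        exact omap_strictMonoOn hRcards x hx y hy hxy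
  · -- edges
    rw [hM₁, hM₂, Finset.image_image]
    apply Finset.image_congr
    intro i _
    show E (b i) = (E (a i)).image F
    rw [hestruct _ (hEmem (a i)), hestruct _ (hEmem (b i))]
    rw [Finset.image_insert, Finset.image_singleton]
    have e1 : F (eleft (E (a i))) = eleft (E (b i)) := by
      rw [hElE (a i), hElE (b i)]
      rw [hFL _ (Finset.mem_image_of_mem _ (Finset.mem_univ i)), homapL]
    have e2 : F (eright (E (a i))) = eright (E (b i)) := by
      have hra : eright (E (a i)) = ρ (a i) := rfl
      have hrb : eright (E (b i)) = ρ (b i) := rfl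
      rw [hra, hrb, hFR _ (Finset.mem_image_of_mem _ (Finset.mem_univ i)), homapR]
    rw [e1, e2]

lemma eight_thirds_rpow {α : ℝ} (hα₂ : α ≤ 2 / 3) (hα0 : 0 ≤ α) :
    ((8 : ℝ) / 3) ^ α ≤ 2 := by
  have h1 : ((8 : ℝ) / 3) ^ α ≤ ((8 : ℝ) / 3) ^ ((2 : ℝ) / 3) :=
    Real.rpow_le_rpow_of_exponent_le (by norm_num) hα₂
  refine h1.trans ?_
  have hx0 : (0 : ℝ) ≤ ((8 : ℝ) / 3) ^ ((2 : ℝ) / 3) := Real.rpow_nonneg (by norm_num) _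
  have key : (((8 : ℝ) / 3) ^ ((2 : ℝ) / 3)) ^ (3 : ℕ) ≤ 2 ^ (3 : ℕ) := by
    rw [← Real.rpow_natCast (((8 : ℝ) / 3) ^ ((2 : ℝ) / 3)) 3, ← Real.rpow_mul (by norm_num)]
    have h23 : ((2:ℝ)/3 * (3:ℕ)) = ((2:ℕ):ℝ) := by push_cast; ring
    rw [h23, Real.rpow_natCast]
    norm_num
  exact le_of_pow_le_pow_left₀ (by norm_num) (by norm_num) key

lemma main_lemma (α β : ℝ) (hα₁ : 3 / 5 ≤ α) (hα₂ : α ≤ 2 / 3) (hβ : 0 < β)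
    (htau : ∀ n : ℕ, 2 ≤ n → β * (n : ℝ) ^ α ≤ (permTau n : ℝ)) :
    ∀ n : ℕ, ∀ M : Finset (Finset ℕ), IsMatching 2 M → M.card = n → 2 ≤ n →
      β * ((n : ℝ) / 4) ^ α ≤ (twinMax M : ℝ) := by
  have hα0 : (0 : ℝ) ≤ α := by linarith
  have hβ2 : β * 2 ^ α ≤ 1 := by
    have h1 := htau 2 (le_refl 2)
    have h2 : ((permTau 2 : ℕ) : ℝ) ≤ 1 := by exact_mod_cast permTau_two_le
    calc β * 2 ^ α = β * ((2 : ℕ) : ℝ) ^ α := by norm_num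
    _ ≤ (permTau 2 : ℝ) := h1
    _ ≤ 1 := h2
  intro n
  induction n using Nat.strong_induction_on with
  | _ n ih =>
    intro M hM hMc hn
    by_cases hn8 : n ≤ 8
    · -- small case: twins of size one suffice
      have htw : HasTwins M 1 := by
        have h2 : 1 < M.card := by omega
        obtain ⟨e, he, f, hf, hef⟩ := Finset.one_lt_card.mp h2
        exact hasTwins_one he hf (by rw [hM.1 e he, hM.1 f hf]) (hM.2 e he f hf hef)
      have h1 : (1 : ℝ) ≤ (twinMax M : ℝ) := by exact_mod_cast le_twinMax htw
      refine le_trans ?_ h1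
      have hsplit : (n : ℝ) / 4 = 2 * ((n : ℝ) / 8) := by ring
      rw [hsplit, Real.mul_rpow (by norm_num) (by positivity)]
      have h8 : ((n : ℝ) / 8) ^ α ≤ 1 :=
        Real.rpow_le_one (by positivity) (by
          have : (n : ℝ) ≤ 8 := by exact_mod_cast hn8
          linarith) hα0
      calc β * (2 ^ α * ((n : ℝ) / 8) ^ α) = (β * 2 ^ α) * ((n : ℝ) / 8) ^ α := by ring
      _ ≤ 1 * 1 := by
          apply mul_le_mul hβ2 h8 (by positivity)
          norm_num
      _ = 1 := by norm_num
    · -- n ≥ 9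
      push_neg at hn8
      have hsupc : (mSupport M).card = 2 * n := by rw [card_mSupport hM, hMc]
      obtain ⟨p, hp⟩ := exists_split (mSupport M) (by omega : 1 ≤ n) (by omega)
      set A := M.filter (fun e => ∀ x ∈ e, x ≤ p) with hA
      set B := M.filter (fun e => ∀ x ∈ e, p < x) with hB
      set C := M.filter (fun e => (∃ x ∈ e, x ≤ p) ∧ ∃ x ∈ e, p < x) with hC
      have hcount1 : n = 2 * A.card + C.card := by rw [← hp, count_split hM p]
      have hcount2 : n = 2 * B.card + C.card := by
        have hneg : ((mSupport M).filter (fun x => p < x)).card = 2 * n - n := by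
          have := Finset.card_filter_add_card_filter_not
            (s := mSupport M) (p := fun x => x ≤ p)
          have heq : (mSupport M).filter (fun x => ¬ x ≤ p)
              = (mSupport M).filter (fun x => p < x) := by
            apply Finset.filter_congr; intro x _; simp [not_le]
          rw [heq] at this
          omega
        have := count_split' hM p
        rw [hneg] at this
        have e1 : B.card = (M.filter (fun e => ∀ x ∈ e, p < x)).card := rfl
        have e2 : C.card =
          (M.filter (fun e => (∃ x ∈ e, x ≤ p) ∧ ∃ x ∈ e, p < x)).card := rfl
        omega
      -- submatchings
      have hmA : IsMatching 2 A :=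
        ⟨fun e he => hM.1 e (Finset.mem_filter.1 he).1,
         fun e he f hf hef => hM.2 e (Finset.mem_filter.1 he).1 f (Finset.mem_filter.1 hf).1 hef⟩
      have hmB : IsMatching 2 B :=
        ⟨fun e he => hM.1 e (Finset.mem_filter.1 he).1,
         fun e he f hf hef => hM.2 e (Finset.mem_filter.1 he).1 f (Finset.mem_filter.1 hf).1 hef⟩
      have hmC : IsMatching 2 C :=
        ⟨fun e he => hM.1 e (Finset.mem_filter.1 he).1,
         fun e he f hf hef => hM.2 e (Finset.mem_filter.1 he).1 f (Finset.mem_filter.1 hf).1 hef⟩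
      by_cases hc4 : n ≤ 4 * C.card
      · -- many crossing edges
        have hc2 : 2 ≤ C.card := by omega
        have hKall := permTau_spec C.card
        have htwC : HasTwins C (permTau C.card) :=
          crossing_twins hmC p (fun e he => (Finset.mem_filter.1 he).2) hKall
        have htwM : HasTwins M (permTau C.card) :=
          hasTwins_mono (Finset.filter_subset _ _) htwC
        have h1 : ((permTau C.card : ℕ) : ℝ) ≤ (twinMax M : ℝ) := by
          exact_mod_cast le_twinMax htwM
        refine le_trans (le_trans ?_ (htau C.card hc2)) h1
        apply mul_le_mul_of_nonneg_left _ hβ.le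
        apply Real.rpow_le_rpow (by positivity) _ hα0
        have : (n : ℝ) ≤ 4 * (C.card : ℝ) := by exact_mod_cast hc4
        linarith
      · -- few crossing edges: recurse on both sides
        push_neg at hc4
        have hab : A.card = B.card := by omega
        have ha2 : 2 ≤ A.card := by omega
        have haln : A.card < n := by omega
        have ihA := ih A.card haln A hmA rfl ha2
        have ihB := ih B.card (by omega) B hmB rfl (by omega)
        have htwA := twinMax_hasTwins A
        have htwB := twinMax_hasTwins B
        have htwM : HasTwins M (twinMax A + twinMax B) := by
          refine hasTwins_union (p := p) (Finset.filter_subset _ _) (Finset.filter_subset _ _)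
            ?_ ?_ ?_ ?_ htwA htwB
          · intro e he
            exact Finset.card_pos.mp (by rw [hmA.1 e he]; norm_num)
          · intro e he
            exact Finset.card_pos.mp (by rw [hmB.1 e he]; norm_num)
          · intro x hx
            obtain ⟨e, he, hxe⟩ := mem_mSupport.1 hx
            exact (Finset.mem_filter.1 he).2 x hxe
          · intro x hx
            obtain ⟨e, he, hxe⟩ := mem_mSupport.1 hx
            exact (Finset.mem_filter.1 he).2 x hxe
        have hsum : ((twinMax A + twinMax B : ℕ) : ℝ) ≤ (twinMax M : ℝ) := by
          exact_mod_cast le_twinMax htwM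
        rw [Nat.cast_add] at hsum
        -- key real inequality
        have haR : (3 : ℝ) * n / 8 ≤ (A.card : ℝ) := by
          have h8a : 3 * n + 1 ≤ 8 * A.card := by omega
          have : (3 * (n : ℝ) + 1) ≤ 8 * (A.card : ℝ) := by exact_mod_cast h8a
          linarith
        have hkey : ((n : ℝ) / 4) ^ α ≤ 2 * (((A.card : ℝ)) / 4) ^ α := by
          have hfac : (n : ℝ) / 4 = (8 / 3) * (3 * (n : ℝ) / 32) := by ring
          have h1 : ((n : ℝ) / 4) ^ α = ((8 : ℝ) / 3) ^ α * ((3 * (n : ℝ) / 32)) ^ α := by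
            rw [hfac, Real.mul_rpow (by norm_num) (by positivity)]
          rw [h1]
          have h2 : ((3 * (n : ℝ) / 32)) ^ α ≤ (((A.card : ℝ)) / 4) ^ α := by
            apply Real.rpow_le_rpow (by positivity) _ hα0
            linarith
          have h3 := eight_thirds_rpow hα₂ hα0
          have h4 : (0:ℝ) ≤ ((3 * (n : ℝ) / 32)) ^ α := Real.rpow_nonneg (by positivity) _
          nlinarith [Real.rpow_nonneg (show (0:ℝ) ≤ (A.card : ℝ)/4 by positivity) α]
        calc β * ((n : ℝ) / 4) ^ α ≤ β * (2 * (((A.card : ℝ)) / 4) ^ α) :=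
              mul_le_mul_of_nonneg_left hkey hβ.le
        _ = β * (((A.card : ℝ)) / 4) ^ α + β * (((B.card : ℝ)) / 4) ^ α := by
              rw [show ((B.card : ℝ)) = ((A.card : ℝ)) by exact_mod_cast hab.symm]; ring
        _ ≤ (twinMax A : ℝ) + (twinMax B : ℝ) := add_le_add ihA ihB
        _ ≤ (twinMax M : ℝ) := hsum

/-- the canonical ordered matching -/
def exMatch (n : ℕ) : Finset (Finset ℕ) :=
  (Finset.range n).image (fun i => ({2 * i + 1, 2 * i + 2} : Finset ℕ))

lemma exMatch_ordered (n : ℕ) : IsOrderedMatching 2 n (exMatch n) := by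
  have hpair : ∀ i : ℕ, ({2 * i + 1, 2 * i + 2} : Finset ℕ).card = 2 := by
    intro i
    rw [Finset.card_insert_of_notMem (by simp), Finset.card_singleton]
  refine ⟨⟨?_, ?_⟩, ?_, ?_⟩
  · intro e he
    rcases Finset.mem_image.1 he with ⟨i, _, rfl⟩
    exact hpair i
  · intro e he f hf hef
    rcases Finset.mem_image.1 he with ⟨i, _, rfl⟩
    rcases Finset.mem_image.1 hf with ⟨j, _, rfl⟩
    have hij : i ≠ j := by rintro rfl; exact hef rfl
    rw [Finset.disjoint_left]
    intro x hx hx'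
    simp only [Finset.mem_insert, Finset.mem_singleton] at hx hx'
    omega
  · rw [exMatch, Finset.card_image_of_injOn, Finset.card_range]
    intro i hi j hj hij
    simp only at hij
    have : 2 * i + 1 ∈ ({2 * j + 1, 2 * j + 2} : Finset ℕ) := by
      rw [← hij]; simp
    simp only [Finset.mem_insert, Finset.mem_singleton] at this
    omega
  · ext x
    rw [mem_mSupport]
    simp only [exMatch, Finset.mem_image, Finset.mem_range, Finset.mem_Icc]
    constructor
    · rintro ⟨e, ⟨i, hi, rfl⟩, hx⟩
      simp only [Finset.mem_insert, Finset.mem_singleton] at hx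
      omega
    · rintro ⟨hx1, hx2⟩
      refine ⟨{2 * ((x - 1) / 2) + 1, 2 * ((x - 1) / 2) + 2}, ⟨(x - 1) / 2, by omega, rfl⟩, ?_⟩
      simp only [Finset.mem_insert, Finset.mem_singleton]
      omega


end TwinsProof

/-- Proposition 3.1, `polyn`. For all `3/5 ≤ α ≤ 2/3` and
`β > 0`: if `τ(n) ≥ β·n^α` for all `n ≥ 2`, then `t^(2)(n) ≥ β·(n/4)^α` for all
`n ≥ 2`. -/
theorem prop_graph_case (α β : ℝ) (hα₁ : 3 / 5 ≤ α) (hα₂ : α ≤ 2 / 3) (hβ : 0 < β)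
    (htau : ∀ n : ℕ, 2 ≤ n → β * (n : ℝ) ^ α ≤ (permTau n : ℝ)) :
    ∀ n : ℕ, 2 ≤ n → β * ((n : ℝ) / 4) ^ α ≤ (minTwins 2 n : ℝ) := by
  intro n hn
  have hne : {t | ∃ M, IsOrderedMatching 2 n M ∧ twinMax M = t}.Nonempty :=
    ⟨twinMax (exMatch n), exMatch n, exMatch_ordered n, rfl⟩
  have hmem := Nat.sInf_mem hne
  obtain ⟨M, hMord, hMeq⟩ := hmem
  rw [minTwins, ← hMeq]
  exact main_lemma α β hα₁ hα₂ hβ htau n M hMord.1 hMord.2.1 hn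
end

section
/- Let r ≥ 2 and let M = {e_1, …, e_m} be an ordered r-matching for which there exists a threshold h such that each edge e_i has exactly r−1 vertices at most h (forming the set e_i*) and exactly one vertex v_i greater than h, and such that {e_1*, …, e_m*}, with e_1* < ⋯ < e_m*, is a P-clique for some (r−1)-pattern P. If the sequence (v_1, …, v_m) contains two order-isomorphic subsequences occupying disjoint index sets, each of length t, then M contains twins of size t. In particular, t(M) ≥ τ(m). -/
/-! The order-preserving bijection between the supports of two sub-matchings carries edges to
edges as soon as every vertex of an edge has a counterpart in the corresponding edge with the same
rank in every edge, since its rank in the support is the sum of these. For a prefix vertex the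
edgewise ranks are dictated by the common pattern `P` of any two prefixes, the two index
subsequences listing the prefixes in the same order of their minima. A top vertex `v_i` lies above
every prefix, so its edgewise ranks only see the relative order of the `v`'s, which agrees on the
two subsequences. Finally, a permutation ranking `(v_1, …, v_m)` turns twins of the permutation
into order-isomorphic subsequences of `v`, whence `t(M) ≥ τ(m)`. -/

open Finset Function

def rank (s : Finset ℕ) (x : ℕ) : ℕ := #(s.filter (· < x))

lemma rank_strictMonoOn (s : Finset ℕ) : StrictMonoOn (rank s) s := by
  intro x hx y _ hxy
  refine card_lt_card ⟨fun z hz => ?_, fun hsub => ?_⟩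
  · simp only [mem_filter] at hz ⊢
    exact ⟨hz.1, hz.2.trans hxy⟩
  simpa using hsub (mem_filter.mpr ⟨hx, hxy⟩)

lemma rank_lt_card {s : Finset ℕ} {x : ℕ} (hx : x ∈ s) : rank s x < #s :=
  card_lt_card (filter_ssubset.mpr ⟨x, hx, lt_irrefl x⟩)

lemma rank_eq_card {s : Finset ℕ} {x : ℕ} (hs : ∀ y ∈ s, y < x) : rank s x = #s := by
  rw [rank, filter_true_of_mem hs]

lemma rank_singleton (y x : ℕ) : rank {y} x = if y < x then 1 else 0 := by
  rw [rank, filter_singleton]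
  split_ifs <;> rfl

lemma rank_union {s t : Finset ℕ} (hst : Disjoint s t) (x : ℕ) :
    rank (s ∪ t) x = rank s x + rank t x := by
  rw [rank, filter_union, card_union_of_disjoint (disjoint_filter_filter hst)]
  rfl

lemma rank_biUnion {ι : Type*} [Fintype ι] {E : ι → Finset ℕ}
    (hE : Pairwise (Disjoint on E)) (x : ℕ) :
    rank (univ.biUnion E) x = ∑ i, rank (E i) x := by
  rw [rank, filter_biUnion, card_biUnion fun i _ j _ hij => disjoint_filter_filter (hE hij)]
  rfl

lemma rank_filter_le {s : Finset ℕ} {h x : ℕ} (hx : x ≤ h) :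
    rank (s.filter (· ≤ h)) x = rank s x := by
  rw [rank, rank, filter_filter]
  congr 1
  exact filter_congr fun z _ => ⟨fun hz => hz.2, fun hz => ⟨by omega, hz⟩⟩

lemma rank_image {f : ℕ → ℕ} {s t : Finset ℕ} (hf : StrictMonoOn f s) (ht : t ⊆ s)
    {x : ℕ} (hx : x ∈ s) : rank (t.image f) (f x) = rank t x := by
  have : (t.image f).filter (· < f x) = (t.filter (· < x)).image f := by
    rw [filter_image]
    congr 1
    exact filter_congr fun y hy => (hf.lt_iff_lt (ht hy) hx)
  rw [rank, this, card_image_of_injOn (hf.injOn.mono fun y hy => ht (mem_filter.mp hy).1)]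
  rfl

lemma image_rank (s : Finset ℕ) : s.image (rank s) = range #s :=
  eq_of_subset_of_card_le (fun _ hk => by
      obtain ⟨x, hx, rfl⟩ := mem_image.mp hk
      exact mem_range.mpr (rank_lt_card hx))
    (by rw [card_range, card_image_of_injOn (rank_strictMonoOn s).injOn])

lemma exists_rank_eq {s t : Finset ℕ} (hst : #s = #t) {x : ℕ} (hx : x ∈ s) :
    ∃ y ∈ t, rank t y = rank s x :=
  mem_image.mp (image_rank t ▸ mem_range.mpr (hst ▸ rank_lt_card hx))

lemma exists_strictMonoOn_image_eq {s t : Finset ℕ} (hst : #s = #t) :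
    ∃ f : ℕ → ℕ, StrictMonoOn f s ∧ s.image f = t := by
  let σ : s ≃o t := (s.orderIsoOfFin hst).symm.trans (t.orderIsoOfFin rfl)
  let f : ℕ → ℕ := fun x => if hx : x ∈ s then σ ⟨x, hx⟩ else 0
  have hf : StrictMonoOn f s := fun x hx y hy hxy => by
    simp only [f, dif_pos (mem_coe.mp hx), dif_pos (mem_coe.mp hy)]
    exact σ.lt_iff_lt.mpr (Subtype.mk_lt_mk.mpr hxy)
  refine ⟨f, hf, eq_of_subset_of_card_le (fun y hy => ?_) ?_⟩
  · obtain ⟨x, hx, rfl⟩ := mem_image.mp hy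
    simp only [f, dif_pos hx]
    exact (σ ⟨x, hx⟩).2
  · rw [card_image_of_injOn hf.injOn, hst]

lemma eq_of_rank_eq {f : ℕ → ℕ} {s t : Finset ℕ} (hf : StrictMonoOn f s) (hst : s.image f = t)
    {x y : ℕ} (hx : x ∈ s) (hy : y ∈ t) (hrank : rank s x = rank t y) : f x = y := by
  have hfx : f x ∈ t := hst ▸ mem_image_of_mem f hx
  refine (rank_strictMonoOn t).injOn hfx hy ?_
  rw [← hrank, ← rank_image hf subset_rfl hx, hst]

lemma mSupport_image_univ {ι : Type*} [Fintype ι] (E : ι → Finset ℕ) :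
    mSupport (univ.image E) = univ.biUnion E := by
  rw [mSupport, sup_image, sup_eq_biUnion]
  rfl

lemma card_biUnion_eq_of_card_eq {ι : Type*} [Fintype ι] {E F : ι → Finset ℕ}
    (hE : Pairwise (Disjoint on E)) (hF : Pairwise (Disjoint on F))
    (hcard : ∀ i, #(E i) = #(F i)) : #(univ.biUnion E) = #(univ.biUnion F) := by
  rw [card_biUnion fun i _ j _ hij => hE hij, card_biUnion fun i _ j _ hij => hF hij]
  exact sum_congr rfl fun i _ => hcard i

lemma matchIso_image_of_rank_eq {ι : Type*} [Fintype ι] {E F : ι → Finset ℕ}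
    (hE : Pairwise (Disjoint on E)) (hF : Pairwise (Disjoint on F))
    (hcard : ∀ i, #(E i) = #(F i))
    (hrank : ∀ i, ∀ x ∈ E i, ∃ y ∈ F i, ∀ j, rank (E j) x = rank (F j) y) :
    MatchIso (univ.image E) (univ.image F) := by
  obtain ⟨f, hf, himg⟩ := exists_strictMonoOn_image_eq (card_biUnion_eq_of_card_eq hE hF hcard)
  have hmaps : ∀ i, (E i).image f = F i := fun i => by
    refine eq_of_subset_of_card_le (fun y hy => ?_) ?_
    · obtain ⟨x, hx, rfl⟩ := mem_image.mp hy
      obtain ⟨y, hy, hxy⟩ := hrank i x hx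
      rwa [eq_of_rank_eq hf himg (mem_biUnion.mpr ⟨i, mem_univ i, hx⟩)
        (mem_biUnion.mpr ⟨i, mem_univ i, hy⟩)
        (by rw [rank_biUnion hE, rank_biUnion hF]; exact sum_congr rfl fun j _ => hxy j)]
    · rw [card_image_of_injOn (hf.injOn.mono fun x hx => mem_biUnion.mpr ⟨i, mem_univ i, hx⟩),
        hcard]
  refine ⟨f, ?_, ?_, ?_⟩
  · rw [mSupport_image_univ, mSupport_image_univ, ← himg, coe_image]
    exact hf.injOn.bijOn_image
  · rw [mSupport_image_univ]
    exact hf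
  · simp only [image_image, comp_def, hmaps]

lemma mSupport_pair (A B : Finset ℕ) : mSupport {A, B} = A ∪ B := by
  simp [mSupport]

lemma MatchIso.exists_strictMonoOn_pair {A B : Finset ℕ} {P : Finset (Finset ℕ)}
    (h : MatchIso {A, B} P) :
    ∃ g : ℕ → ℕ, StrictMonoOn g ↑(A ∪ B) ∧ P = {A.image g, B.image g} := by
  obtain ⟨g, -, hg, rfl⟩ := h
  rw [mSupport_pair] at hg
  exact ⟨g, hg, by rw [image_insert, image_singleton]⟩

lemma min'_image_of_monotoneOn {g : ℕ → ℕ} {s t : Finset ℕ} (hg : MonotoneOn g s)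
    (ht : t ⊆ s) (hne : t.Nonempty) : (t.image g).min' (hne.image g) = g (t.min' hne) := by
  refine le_antisymm (min'_le _ _ (mem_image_of_mem g (min'_mem t hne))) ?_
  obtain ⟨y, hy, hgy⟩ := mem_image.mp (min'_mem _ (hne.image g))
  rw [← hgy]
  exact hg (ht (min'_mem t hne)) (ht hy) (min'_le t y hy)

lemma images_eq_of_matchIso_pair {A B C D : Finset ℕ} {P : Finset (Finset ℕ)}
    (hA : A.Nonempty) (hB : B.Nonempty) (hC : C.Nonempty) (hD : D.Nonempty)
    (hAB : MatchIso {A, B} P) (hCD : MatchIso {C, D} P)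
    (hABlt : A.min' hA < B.min' hB) (hCDlt : C.min' hC < D.min' hD) :
    ∃ g₁ g₂ : ℕ → ℕ, StrictMonoOn g₁ ↑(A ∪ B) ∧ StrictMonoOn g₂ ↑(C ∪ D) ∧
      A.image g₁ = C.image g₂ ∧ B.image g₁ = D.image g₂ := by
  obtain ⟨g₁, hg₁, rfl⟩ := hAB.exists_strictMonoOn_pair
  obtain ⟨g₂, hg₂, hP⟩ := hCD.exists_strictMonoOn_pair
  refine ⟨g₁, g₂, hg₁, hg₂, ?_⟩
  have hpair := congrArg (fun Q : Finset (Finset ℕ) => (Q : Set (Finset ℕ))) hP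
  simp only [coe_insert, coe_singleton, Set.pair_eq_pair_iff] at hpair
  -- matching `A` with `D` and `B` with `C` would reverse the order of the minima
  refine hpair.resolve_right fun ⟨hAD, hBC⟩ => ?_
  have hminA := min'_image_of_monotoneOn hg₁.monotoneOn subset_union_left hA
  have hminB := min'_image_of_monotoneOn hg₁.monotoneOn subset_union_right hB
  have hminC := min'_image_of_monotoneOn hg₂.monotoneOn subset_union_left hC
  have hminD := min'_image_of_monotoneOn hg₂.monotoneOn subset_union_right hD
  simp only [hAD, hBC] at hminA hminB
  have h₁ := hg₁ (mem_union_left B (min'_mem A hA)) (mem_union_right A (min'_mem B hB)) hABlt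
  have h₂ := hg₂ (mem_union_left D (min'_mem C hC)) (mem_union_right C (min'_mem D hD)) hCDlt
  omega

lemma rank_eq_of_images_eq {A B C D : Finset ℕ} {g₁ g₂ : ℕ → ℕ}
    (hg₁ : StrictMonoOn g₁ ↑(A ∪ B)) (hg₂ : StrictMonoOn g₂ ↑(C ∪ D))
    (hAC : A.image g₁ = C.image g₂) (hBD : B.image g₁ = D.image g₂)
    {x x' : ℕ} (hx : x ∈ A) (hx' : x' ∈ C) (hrank : rank A x = rank C x') :
    rank B x = rank D x' := by
  have hgx : g₁ x = g₂ x' := by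
    refine (rank_strictMonoOn (C.image g₂)).injOn (hAC ▸ mem_image_of_mem g₁ hx)
      (mem_image_of_mem g₂ hx') ?_
    rw [← hAC, rank_image hg₁ subset_union_left (mem_union_left B hx), hrank, hAC,
      rank_image hg₂ subset_union_left (mem_union_left D hx')]
  calc rank B x = rank (B.image g₁) (g₁ x) :=
        (rank_image hg₁ subset_union_right (mem_union_left B hx)).symm
    _ = rank (D.image g₂) (g₂ x') := by rw [hBD, hgx]
    _ = rank D x' := rank_image hg₂ subset_union_right (mem_union_left D hx')

lemma rank_eq_of_matchIso_pair {A B C D : Finset ℕ} {P : Finset (Finset ℕ)}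
    (hA : A.Nonempty) (hB : B.Nonempty) (hC : C.Nonempty) (hD : D.Nonempty)
    (hAB : MatchIso {A, B} P) (hCD : MatchIso {C, D} P)
    (hmin : A.min' hA < B.min' hB ∧ C.min' hC < D.min' hD ∨
      B.min' hB < A.min' hA ∧ D.min' hD < C.min' hC)
    {x x' : ℕ} (hx : x ∈ A) (hx' : x' ∈ C) (hrank : rank A x = rank C x') :
    rank B x = rank D x' := by
  rcases hmin with ⟨hABlt, hCDlt⟩ | ⟨hBAlt, hDClt⟩
  · obtain ⟨g₁, g₂, hg₁, hg₂, hAC, hBD⟩ := images_eq_of_matchIso_pair hA hB hC hD hAB hCD hABlt hCDlt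
    exact rank_eq_of_images_eq hg₁ hg₂ hAC hBD hx hx' hrank
  · rw [pair_comm] at hAB hCD
    obtain ⟨g₁, g₂, hg₁, hg₂, hBD, hAC⟩ := images_eq_of_matchIso_pair hB hA hD hC hAB hCD hBAlt hDClt
    rw [union_comm] at hg₁ hg₂
    exact rank_eq_of_images_eq hg₁ hg₂ hAC hBD hx hx' hrank

lemma hasTwins_of_matchIso {ι : Type*} [Fintype ι] {E : ι → Finset ℕ}
    (hE : Pairwise (Disjoint on E)) (hne : ∀ i, (E i).Nonempty) {t : ℕ} {a b : Fin t → ι}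
    (ha : Injective a) (hb : Injective b) (hab : ∀ i j, a i ≠ b j)
    (hiso : MatchIso (univ.image (E ∘ a)) (univ.image (E ∘ b))) :
    HasTwins (univ.image E) t := by
  have hEinj : Injective E := fun i j hij => by
    by_contra hne'
    have : Disjoint (E i) (E j) := hE hne'
    rw [hij, disjoint_self_iff_empty] at this
    exact (hne j).ne_empty this
  refine ⟨_, _, ?_, ?_, ?_, hiso, ?_, ?_⟩
  · exact image_subset_iff.mpr fun i _ => mem_image_of_mem E (mem_univ (a i))
  · exact image_subset_iff.mpr fun i _ => mem_image_of_mem E (mem_univ (b i))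
  · rw [mSupport_image_univ, mSupport_image_univ, disjoint_biUnion_left]
    exact fun i _ => (disjoint_biUnion_right _ _ _).mpr fun j _ => hE (hab i j)
  · rw [card_image_of_injective _ (hEinj.comp ha), card_univ, Fintype.card_fin]
  · rw [card_image_of_injective _ (hEinj.comp hb), card_univ, Fintype.card_fin]

lemma exists_rank_eq_of_pClique {m k t : ℕ} {p : Fin m → Finset ℕ} {P : Finset (Finset ℕ)}
    (hcard : ∀ i, #(p i) = k) (hmin : StrictMono fun i => (p i).min)
    (hclique : IsPClique P (univ.image p)) {a b : Fin t → Fin m}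
    (ha : StrictMono a) (hb : StrictMono b) {i : Fin t} {x : ℕ} (hx : x ∈ p (a i)) :
    ∃ x' ∈ p (b i), ∀ j, rank (p (a j)) x = rank (p (b j)) x' := by
  have hne : ∀ j, (p j).Nonempty := fun j =>
    card_pos.mp ((hcard j).trans (hcard (a i)).symm ▸ card_pos.mpr ⟨x, hx⟩)
  have hmin' : StrictMono fun j => (p j).min' (hne j) := fun j l hjl => by
    have := hmin hjl
    simp only [← coe_min' (hne j), ← coe_min' (hne l)] at this
    exact_mod_cast this
  have hpair : ∀ j l, j ≠ l → MatchIso {p j, p l} P := fun j l hjl =>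
    hclique _ (mem_image_of_mem p (mem_univ j)) _ (mem_image_of_mem p (mem_univ l))
      fun heq => hjl (hmin.injective (congrArg Finset.min heq))
  obtain ⟨x', hx', hrank⟩ := exists_rank_eq ((hcard _).trans (hcard _).symm) hx
  refine ⟨x', hx', fun j => ?_⟩
  rcases lt_trichotomy i j with hij | rfl | hji
  · exact rank_eq_of_matchIso_pair (hne _) (hne _) (hne _) (hne _)
      (hpair _ _ (ha.injective.ne hij.ne)) (hpair _ _ (hb.injective.ne hij.ne))
      (Or.inl ⟨hmin' (ha hij), hmin' (hb hij)⟩) hx hx' hrank.symm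
  · exact hrank.symm
  · exact rank_eq_of_matchIso_pair (hne _) (hne _) (hne _) (hne _)
      (hpair _ _ (ha.injective.ne hji.ne')) (hpair _ _ (hb.injective.ne hji.ne'))
      (Or.inr ⟨hmin' (ha hji), hmin' (hb hji)⟩) hx hx' hrank.symm

lemma eq_filter_le_union_singleton {s : Finset ℕ} {h v : ℕ}
    (hcard : #s = #(s.filter (· ≤ h)) + 1) (hv : v ∈ s) (hvh : h < v) :
    s = s.filter (· ≤ h) ∪ {v} := by
  have hgt : s.filter (¬ · ≤ h) = {v} := by
    refine (eq_of_subset_of_card_le (singleton_subset_iff.mpr (mem_filter.mpr ⟨hv, ?_⟩)) ?_).symm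
    · omega
    · have := card_filter_add_card_filter_not (s := s) (p := (· ≤ h))
      rw [card_singleton]
      omega
  rw [← hgt, filter_union_filter_not_eq]

lemma rank_union_singleton {s : Finset ℕ} {v x : ℕ} (hs : ∀ y ∈ s, y < x) (hv : v ∉ s) :
    rank (s ∪ {v}) x = #s + if v < x then 1 else 0 := by
  rw [rank_union (disjoint_singleton_right.mpr hv), rank_eq_card hs, rank_singleton]

theorem hasTwins_of_pClique_prefixes {m r h t : ℕ} {e : Fin m → Finset ℕ} {v : Fin m → ℕ}
    {P : Finset (Finset ℕ)} (hcard : ∀ i, #(e i) = r)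
    (hdisj : ∀ i j, i ≠ j → Disjoint (e i) (e j))
    (hpre : ∀ i, #((e i).filter (· ≤ h)) = r - 1) (hv : ∀ i, v i ∈ e i ∧ h < v i)
    (hord : StrictMono fun i => ((e i).filter (· ≤ h)).min)
    (hclique : IsPClique P (univ.image fun i => (e i).filter (· ≤ h)))
    {a b : Fin t → Fin m} (ha : StrictMono a) (hb : StrictMono b) (hab : ∀ i j, a i ≠ b j)
    (hiso : ∀ i j, v (a i) < v (a j) ↔ v (b i) < v (b j)) :
    HasTwins (univ.image e) t := by
  have hE : Pairwise (Disjoint on e) := fun i j hij => hdisj i j hij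
  have hedge : ∀ i, e i = (e i).filter (· ≤ h) ∪ {v i} := fun i => by
    have := card_pos.mpr ⟨_, (hv i).1⟩
    have := hcard i
    have := hpre i
    exact eq_filter_le_union_singleton (by omega) (hv i).1 (hv i).2
  have hrank_top : ∀ k l, rank (e l) (v k) = r - 1 + if v l < v k then 1 else 0 := fun k l => by
    rw [hedge l, rank_union_singleton (fun y hy => (mem_filter.mp hy).2.trans_lt (hv k).2)
      (fun hvl => (mem_filter.mp hvl).2.not_gt (hv l).2), hpre]
  refine hasTwins_of_matchIso hE (fun i => ⟨v i, (hv i).1⟩) ha.injective hb.injective hab ?_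
  refine matchIso_image_of_rank_eq (hE.comp_of_injective ha.injective)
    (hE.comp_of_injective hb.injective) (fun i => (hcard _).trans (hcard _).symm) fun i x hx => ?_
  simp only [comp_apply] at hx ⊢
  rcases mem_union.mp (hedge (a i) ▸ hx) with hxp | hxv
  · obtain ⟨x', hx', hrank⟩ := exists_rank_eq_of_pClique hpre hord hclique ha hb hxp
    refine ⟨x', filter_subset _ _ hx', fun j => ?_⟩
    rw [← rank_filter_le (mem_filter.mp hxp).2, ← rank_filter_le (mem_filter.mp hx').2]
    exact hrank j
  · obtain rfl := mem_singleton.mp hxv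
    refine ⟨v (b i), (hv _).1, fun j => ?_⟩
    simp only [hrank_top, hiso]

lemma exists_perm_lt_iff {α : Type*} [LinearOrder α] {m : ℕ} {v : Fin m → α}
    (hv : Injective v) : ∃ π : Equiv.Perm (Fin m), ∀ i j, π i < π j ↔ v i < v j := by
  have hcard : #(univ.image v) = m := by
    rw [card_image_of_injective _ hv, card_univ, Fintype.card_fin]
  let σ := ((univ.image v).orderIsoOfFin hcard).symm
  let π : Fin m → Fin m := fun i => σ ⟨v i, mem_image_of_mem v (mem_univ i)⟩
  have hπ : ∀ i j, π i < π j ↔ v i < v j := fun i j => σ.lt_iff_lt.trans Subtype.mk_lt_mk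
  refine ⟨Equiv.ofBijective π (Finite.injective_iff_bijective.mp fun i j hij => ?_), hπ⟩
  exact hv (congrArg Subtype.val (σ.injective hij))

lemma HasTwins.le_card {M : Finset (Finset ℕ)} {k : ℕ} (h : HasTwins M k) : k ≤ #M := by
  obtain ⟨M₁, -, hM₁, -, -, -, rfl, -⟩ := h
  exact card_le_card hM₁

lemma permTau_le_twinMax {m : ℕ} {M : Finset (Finset ℕ)}
    (h : ∀ k, (∀ π : Equiv.Perm (Fin m), PermTwins π k) → HasTwins M k) :
    permTau m ≤ twinMax M :=
  csSup_le ⟨0, fun _ => ⟨Fin.elim0, Fin.elim0, fun i => i.elim0, fun i => i.elim0,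
      fun i => i.elim0, fun i => i.elim0⟩⟩
    fun k hk => le_csSup ⟨#M, fun _ => HasTwins.le_card⟩ (h k hk)

theorem twins_from_clique_prefix_and_permutation_general (r m : ℕ)
    (e : Fin m → Finset ℕ) (h : ℕ)
    (hcard : ∀ i, (e i).card = r)
    (hdisj : ∀ i j, i ≠ j → Disjoint (e i) (e j))
    (hpre : ∀ i, ((e i).filter (· ≤ h)).card = r - 1)
    (v : Fin m → ℕ) (hv : ∀ i, v i ∈ e i ∧ h < v i)
    (hord : StrictMono fun i => ((e i).filter (· ≤ h)).min)
    (P : Finset (Finset ℕ))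
    (hclique : IsPClique P (Finset.image (fun i => (e i).filter (· ≤ h)) Finset.univ)) :
    (∀ t : ℕ, ∀ a b : Fin t → Fin m, StrictMono a → StrictMono b →
      (∀ i j, a i ≠ b j) →
      (∀ i j, v (a i) < v (a j) ↔ v (b i) < v (b j)) →
      HasTwins (Finset.image e Finset.univ) t) ∧
    permTau m ≤ twinMax (Finset.image e Finset.univ) := by
  have htwins : ∀ t : ℕ, ∀ a b : Fin t → Fin m, StrictMono a → StrictMono b →
      (∀ i j, a i ≠ b j) → (∀ i j, v (a i) < v (a j) ↔ v (b i) < v (b j)) →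
      HasTwins (univ.image e) t := fun _ _ _ ha hb hab hiso =>
    hasTwins_of_pClique_prefixes hcard hdisj hpre hv hord hclique ha hb hab hiso
  have hvinj : Injective v := fun i j hij => by
    by_contra hne
    exact disjoint_left.mp (hdisj i j hne) (hv i).1 (hij ▸ (hv j).1)
  obtain ⟨π, hπ⟩ := exists_perm_lt_iff hvinj
  refine ⟨htwins, permTau_le_twinMax fun k hk => ?_⟩
  obtain ⟨a, b, ha, hb, hab, hiso⟩ := hk π
  exact htwins k a b ha hb hab fun i j => by simpa only [hπ] using hiso i j

/-- Subcase 2a of the proof of Lemma 3.2. Let `M = {e_1,…,e_m}`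
be an ordered `r`-matching such that each edge has exactly `r-1` vertices `≤ h`
(the prefix `e_i*`) and exactly one vertex `v_i > h`, the prefixes (listed in
increasing order) forming a `P`-clique for some `(r-1)`-pattern `P`. If the
sequence `(v_1,…,v_m)` has two order-isomorphic subsequences on disjoint index
sets, each of length `t`, then `M` has twins of size `t`; in particular
`t(M) ≥ τ(m)`. -/
theorem twins_from_clique_prefix_and_permutation (r m : ℕ) (hr : 2 ≤ r)
    (e : Fin m → Finset ℕ) (h : ℕ)
    (hcard : ∀ i, (e i).card = r)
    (hdisj : ∀ i j, i ≠ j → Disjoint (e i) (e j))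
    (hpre : ∀ i, ((e i).filter (· ≤ h)).card = r - 1)
    (v : Fin m → ℕ) (hv : ∀ i, v i ∈ e i ∧ h < v i)
    (hord : StrictMono fun i => ((e i).filter (· ≤ h)).min)
    (P : Finset (Finset ℕ)) (hP : IsPattern (r - 1) P)
    (hclique : IsPClique P (Finset.image (fun i => (e i).filter (· ≤ h)) Finset.univ)) :
    (∀ t : ℕ, ∀ a b : Fin t → Fin m, StrictMono a → StrictMono b →
      (∀ i j, a i ≠ b j) →
      (∀ i j, v (a i) < v (a j) ↔ v (b i) < v (b j)) →
      HasTwins (Finset.image e Finset.univ) t) ∧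
    permTau m ≤ twinMax (Finset.image e Finset.univ) :=
  twins_from_clique_prefix_and_permutation_general r m e h hcard hdisj hpre v hv hord P hclique
end
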